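/- Let d ≥ 2 be an integer and let z ∈ ℂ with Re z > 0. Then lim_{m→0⁺} m² (m/(2πz))^(d−2) [ K_{d/2}(mz)² − K_{d/2−1}(mz)² ] = Γ(d/2)² / ( π^(d−2) z^(2d−2) ). -/

import Mathlib

open MeasureTheory Filter
open scoped Topology
open Set Complex
open scoped Real

lemma integrableOn_rpow_mul_exp_neg_mul {s b : ℝ} (hs : -1 < s) (hb : 0 < b) :
    IntegrableOn (fun x : ℝ => x ^ s * Real.exp (-b * x)) (Set.Ioi 0) := by
  have := integrableOn_rpow_mul_exp_neg_mul_rpow hs one_pos hb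
  simpa [Real.rpow_one] using this

section Laplace

variable {ν : ℝ}

lemma meas_aux (z : ℂ) : AEStronglyMeasurable
    (fun t : ℝ => (t:ℂ) ^ ((ν:ℂ) - 1) * Complex.exp (-(z * t)))
    (volume.restrict (Set.Ioi 0)) := by
  apply Measurable.aestronglyMeasurable
  fun_prop

lemma norm_aux {t : ℝ} (ht : 0 < t) (z : ℂ) :
    ‖(t:ℂ) ^ ((ν:ℂ) - 1) * Complex.exp (-(z * t))‖
      = t ^ (ν - 1) * Real.exp (-z.re * t) := by
  rw [norm_mul,
    Complex.norm_cpow_eq_rpow_re_of_pos ht, Complex.norm_exp]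
  norm_num

lemma integrable_aux (hν : 0 < ν) {z : ℂ} (hz : 0 < z.re) :
    Integrable (fun t : ℝ => (t:ℂ) ^ ((ν:ℂ) - 1) * Complex.exp (-(z * t)))
      (volume.restrict (Set.Ioi 0)) := by
  refine Integrable.mono'
    (integrableOn_rpow_mul_exp_neg_mul (s := ν - 1) (b := z.re) (by linarith) hz)
    (meas_aux z) ?_
  filter_upwards [ae_restrict_mem measurableSet_Ioi] with t ht
  rw [norm_aux ht z]

lemma laplace_differentiableAt (hν : 0 < ν) {z₀ : ℂ} (hz₀ : 0 < z₀.re) :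
    DifferentiableAt ℂ
      (fun z => ∫ t in Set.Ioi (0:ℝ), (t:ℂ) ^ ((ν:ℂ) - 1) * Complex.exp (-(z * t))) z₀ := by
  set ε := z₀.re / 2 with hε
  have hε0 : 0 < ε := by positivity
  have key := hasDerivAt_integral_of_dominated_loc_of_deriv_le (μ := volume.restrict (Set.Ioi 0))
    (F := fun z (t : ℝ) => (t:ℂ) ^ ((ν:ℂ) - 1) * Complex.exp (-(z * t)))
    (F' := fun z (t : ℝ) => (t:ℂ) ^ ((ν:ℂ) - 1) * (Complex.exp (-(z * t)) * (-(t:ℂ))))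
    (x₀ := z₀) (bound := fun t : ℝ => t ^ ν * Real.exp (-ε * t)) (Metric.ball_mem_nhds z₀ hε0)
    (Eventually.of_forall fun z => meas_aux z) (integrable_aux hν hz₀)
    ?_ ?_ ?_ ?_
  · exact key.2.differentiableAt
  · apply Measurable.aestronglyMeasurable; fun_prop
  · filter_upwards [ae_restrict_mem measurableSet_Ioi] with t ht z hzb
    have hre : ε ≤ z.re := by
      have h3 := Metric.mem_ball.mp hzb
      have h2 : |z.re - z₀.re| ≤ ‖z - z₀‖ := by
        simpa using Complex.abs_re_le_norm (z - z₀)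
      rw [Complex.dist_eq] at h3
      have := (abs_le.mp (h2.trans h3.le)).1
      simp only [hε] at *
      linarith
    rw [norm_mul, norm_mul, norm_neg, Complex.norm_real, Real.norm_eq_abs, abs_of_pos ht,
      Complex.norm_cpow_eq_rpow_re_of_pos ht,
      Complex.norm_exp]
    simp only [Complex.sub_re, Complex.ofReal_re, Complex.one_re, Complex.neg_re, Complex.mul_re,
      Complex.ofReal_im]
    have h1 : t ^ (ν - 1) * t = t ^ ν := by
      rw [← Real.rpow_add_one ht.ne' (ν - 1)]
      norm_num
    calc t ^ (ν - 1) * (Real.exp (-(z.re * t - z.im * 0)) * t)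
        = t ^ ν * Real.exp (-(z.re * t)) := by
          rw [mul_comm (Real.exp _) t, ← mul_assoc, h1]; ring_nf
      _ ≤ t ^ ν * Real.exp (-ε * t) := by
          gcongr
          · exact Real.rpow_nonneg ht.le ν
          · have ht' : (0:ℝ) < t := ht
            have := mul_le_mul_of_nonneg_right hre ht'.le
            linarith
  · exact integrableOn_rpow_mul_exp_neg_mul (by linarith) hε0
  · filter_upwards [ae_restrict_mem measurableSet_Ioi] with t ht z hzb
    have h1 : HasDerivAt (fun z : ℂ => -(z * t)) (-(t:ℂ)) z := by
      exact (((hasDerivAt_id z).mul_const (t:ℂ)).neg).congr_deriv (by simp)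
    exact (h1.cexp).const_mul _

lemma integral_cpow_mul_exp_neg_cmul (hν : 0 < ν) {z : ℂ} (hz : 0 < z.re) :
    ∫ t in Set.Ioi (0:ℝ), (t:ℂ) ^ ((ν:ℂ) - 1) * Complex.exp (-(z * t))
      = (Real.Gamma ν : ℂ) * z ^ (-(ν:ℂ)) := by
  set U : Set ℂ := {w : ℂ | 0 < w.re} with hU
  have hUopen : IsOpen U := isOpen_lt continuous_const Complex.continuous_re
  have hUconn : IsPreconnected U := (convex_halfSpace_re_gt 0).isPreconnected
  set F : ℂ → ℂ := fun w => ∫ t in Set.Ioi (0:ℝ), (t:ℂ) ^ ((ν:ℂ) - 1) * Complex.exp (-(w * t))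
  set G : ℂ → ℂ := fun w => (Real.Gamma ν : ℂ) * w ^ (-(ν:ℂ))
  have hF : AnalyticOnNhd ℂ F U := by
    refine DifferentiableOn.analyticOnNhd (fun w hw => ?_) hUopen
    exact (laplace_differentiableAt hν hw).differentiableWithinAt
  have hG : AnalyticOnNhd ℂ G U := by
    refine DifferentiableOn.analyticOnNhd (fun w hw => ?_) hUopen
    refine (DifferentiableAt.const_mul ?_ _).differentiableWithinAt
    exact (differentiableAt_id.cpow (differentiableAt_const _) (Or.inl hw))
  have hreal : ∀ r : ℝ, 0 < r → F r = G r := by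
    intro r hr
    have h := Complex.integral_cpow_mul_exp_neg_mul_Ioi
      (a := (ν:ℂ)) (r := r) (by simpa using hν) hr
    simp only [F, G]
    rw [h, Complex.Gamma_ofReal, one_div, Complex.inv_cpow _ _ (by
        rw [Complex.arg_ofReal_of_nonneg hr.le]; exact Real.pi_ne_zero.symm),
      ← Complex.cpow_neg, mul_comm]
  have hseq : Tendsto (fun n : ℕ => ((1 + ((n:ℝ)+1)⁻¹ : ℝ) : ℂ)) atTop (𝓝[≠] 1) := by
    refine tendsto_nhdsWithin_of_tendsto_nhds_of_eventually_within _ ?_ ?_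
    · have h0 : Tendsto (fun n : ℕ => 1 + ((n:ℝ)+1)⁻¹) atTop (𝓝 1) := by
        have h1 := tendsto_one_div_add_atTop_nhds_zero_nat (𝕜 := ℝ)
        have h2 : Tendsto (fun _ : ℕ => (1:ℝ)) atTop (𝓝 1) := tendsto_const_nhds
        simpa [one_div] using h2.add h1
      have := (Complex.continuous_ofReal.tendsto (1:ℝ)).comp h0
      simpa [Function.comp_def, Complex.ofReal_one] using this
    · filter_upwards with n
      simp only [mem_compl_iff, mem_singleton_iff]
      intro h
      rw [show (1:ℂ) = ((1:ℝ):ℂ) by norm_num, Complex.ofReal_inj] at h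
      have h2 : (0:ℝ) < ((n:ℝ)+1)⁻¹ := by positivity
      nlinarith
  have hfreq : ∃ᶠ w in 𝓝[≠] (1:ℂ), F w = G w :=
    hseq.frequently (Frequently.of_forall fun n => hreal _ (by positivity))
  have := hF.eqOn_of_preconnected_of_frequently_eq hG hUconn (by simp [hU]) hfreq
  exact this hz

end Laplace

/-- The modified Bessel function of the second kind `K_ν(z)`, for `Re z > 0` and real order `ν`,
given by `K_ν(z) = ∫₀^∞ e^(−z cosh t) cosh(νt) dt`. -/
noncomputable def besselK (ν : ℝ) (z : ℂ) : ℂ :=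
  ∫ t in Set.Ioi (0 : ℝ), Complex.exp (-z * (Real.cosh t : ℂ)) * (Real.cosh (ν * t) : ℂ)

/-- The substituted integrand. -/
noncomputable def gfun (ν : ℝ) (z : ℂ) (m v : ℝ) : ℂ :=
  Complex.exp (-(z * (((v + m^2/v)/2 : ℝ) : ℂ)))
    * (((v ^ ν + m^(2*ν) * v^(-ν)) / (2*v) : ℝ) : ℂ)

lemma image_mul_exp {m : ℝ} (hm : 0 < m) :
    (fun t : ℝ => m * Real.exp t) '' (Set.Ioi 0) = Set.Ioi m := by
  ext x
  simp only [mem_image, mem_Ioi]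
  constructor
  · rintro ⟨t, ht, rfl⟩
    nlinarith [Real.add_one_le_exp t, hm]
  · intro hx
    refine ⟨Real.log (x / m), ?_, ?_⟩
    · apply Real.log_pos
      rw [lt_div_iff₀ hm]; linarith
    · rw [Real.exp_log (div_pos (by linarith) hm)]
      field_simp

lemma pointwise_eq (ν : ℝ) {m : ℝ} (hm : 0 < m) (z : ℂ) {t : ℝ} (ht : 0 < t) :
    |m * Real.exp t| • gfun ν z m (m * Real.exp t)
      = ((m ^ ν : ℝ) : ℂ)
        * (Complex.exp (-((m:ℂ) * z) * (Real.cosh t : ℂ)) * (Real.cosh (ν * t) : ℂ)) := by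
  have ht' : (0:ℝ) < t := ht
  have hu : (0:ℝ) < m * Real.exp t := by positivity
  have hexp : (0:ℝ) < Real.exp t := Real.exp_pos t
  have harg : (m * Real.exp t + m^2/(m * Real.exp t))/2 = m * Real.cosh t := by
    rw [Real.cosh_eq, Real.exp_neg]
    field_simp
  have hfac : ((m * Real.exp t) ^ ν + m^(2*ν) * (m * Real.exp t)^(-ν)) / (2*(m * Real.exp t))
      = m ^ ν * Real.cosh (ν*t) / (m * Real.exp t) := by
    rw [Real.cosh_eq, Real.mul_rpow hm.le hexp.le, Real.mul_rpow hm.le hexp.le,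
      ← Real.exp_mul, ← Real.exp_mul, ← mul_assoc, ← Real.rpow_add hm, show 2*ν + -ν = ν by ring,
      show t * -ν = -(ν*t) by ring, show t * ν = ν*t by ring]
    field_simp
  have hexparg : -(z * ((m * Real.cosh t : ℝ) : ℂ)) = -((m:ℂ)*z) * (Real.cosh t : ℂ) := by
    push_cast; ring
  show |m * Real.exp t| • gfun ν z m (m * Real.exp t) = _
  rw [gfun, harg, hfac, abs_of_pos hu, Complex.real_smul, hexparg]
  have hne : ((m * Real.exp t : ℝ) : ℂ) ≠ 0 := Complex.ofReal_ne_zero.mpr hu.ne'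
  push_cast at hne ⊢
  have hm0 : (m:ℂ) ≠ 0 := Complex.ofReal_ne_zero.mpr hm.ne'
  field_simp

lemma hasDeriv_mul_exp {m : ℝ} : ∀ t ∈ Set.Ioi (0:ℝ),
    HasDerivWithinAt (fun t => m * Real.exp t) (m * Real.exp t) (Set.Ioi 0) t :=
  fun t _ => ((Real.hasDerivAt_exp t).const_mul m).hasDerivWithinAt

lemma injOn_mul_exp {m : ℝ} (hm : 0 < m) : Set.InjOn (fun t => m * Real.exp t) (Set.Ioi 0) :=
  fun a _ b _ h => Real.exp_injective (mul_left_cancel₀ hm.ne' h)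

lemma subst_eq (ν : ℝ) {m : ℝ} (hm : 0 < m) (z : ℂ) :
    ∫ v in Set.Ioi m, gfun ν z m v = ((m ^ ν : ℝ) : ℂ) * besselK ν ((m : ℂ) * z) := by
  rw [← image_mul_exp hm,
    integral_image_eq_integral_abs_deriv_smul measurableSet_Ioi hasDeriv_mul_exp (injOn_mul_exp hm)]
  unfold besselK
  rw [← integral_const_mul]
  exact setIntegral_congr_fun measurableSet_Ioi (fun t ht => pointwise_eq ν hm z ht)

lemma gfun_meas (ν : ℝ) (z : ℂ) (m : ℝ) :
    AEStronglyMeasurable (gfun ν z m) (volume.restrict (Set.Ioi 0)) := by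
  apply Measurable.aestronglyMeasurable
  unfold gfun
  fun_prop

lemma gfun_norm_le {ν : ℝ} (hν : 0 < ν) {z : ℂ} (hz : 0 < z.re) {m v : ℝ} (hm : 0 < m) (hmv : m < v) :
    ‖gfun ν z m v‖ ≤ v ^ (ν - 1) * Real.exp (-(z.re/2) * v) := by
  have hv : (0:ℝ) < v := hm.trans hmv
  unfold gfun
  set r : ℝ := (v + m^2/v)/2 with hr
  set q : ℝ := (v ^ ν + m^(2*ν) * v^(-ν)) / (2*v) with hq
  rw [norm_mul, Complex.norm_exp, Complex.norm_real, Real.norm_eq_abs]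
  have hre : (-(z * (r : ℂ))).re = -(z.re * r) := by
    simp [Complex.mul_re]
  rw [hre, _root_.abs_of_nonneg (by rw [hq]; positivity)]
  have hb1 : Real.exp (-(z.re * r)) ≤ Real.exp (-(z.re/2) * v) := by
    apply Real.exp_le_exp.2
    have h0 : 0 ≤ m^2/v := by positivity
    rw [hr]; nlinarith [mul_nonneg hz.le h0]
  have hb2 : q ≤ v ^ (ν - 1) := by
    have h1 : m^(2*ν) ≤ v^(2*ν) := Real.rpow_le_rpow hm.le hmv.le (by positivity)
    have h2 : v^(2*ν) * v^(-ν) = v^ν := by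
      rw [← Real.rpow_add hv]; ring_nf
    have h3 : m^(2*ν) * v^(-ν) ≤ v^ν := by
      rw [← h2]
      exact mul_le_mul_of_nonneg_right h1 (Real.rpow_nonneg hv.le _)
    have h4 : v ^ ν / v = v ^ (ν - 1) := by
      nth_rewrite 2 [show v = v ^ (1:ℝ) by rw [Real.rpow_one]]
      rw [← Real.rpow_sub hv]
    calc q ≤ (v ^ ν + v ^ ν) / (2*v) := by
          rw [hq]
          apply div_le_div_of_nonneg_right _ (by positivity)
          · linarith
      _ = v ^ ν / v := by ring
      _ = v ^ (ν - 1) := h4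
  have hq0 : 0 ≤ q := by rw [hq]; positivity
  calc Real.exp (-(z.re * r)) * q
      ≤ Real.exp (-(z.re/2) * v) * (v ^ (ν - 1)) :=
        mul_le_mul hb1 hb2 hq0 (Real.exp_pos _).le
    _ = v ^ (ν - 1) * Real.exp (-(z.re/2) * v) := by ring

lemma tendsto_rpow_mul_besselK {ν : ℝ} (hν : 0 < ν) {z : ℂ} (hz : 0 < z.re) :
    Tendsto (fun m : ℝ => ((m ^ ν : ℝ) : ℂ) * besselK ν ((m:ℂ) * z)) (𝓝[>] 0)
      (𝓝 ((Real.Gamma ν : ℂ) * (z/2) ^ (-(ν:ℂ)) / 2)) := by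
  have hz2 : (0:ℝ) < (z/2).re := by
    rw [show z/2 = z * (2⁻¹ : ℝ) by push_cast; ring]
    simpa using by positivity
  -- the limit integrand
  set f : ℝ → ℂ := fun v => Complex.exp (-(z * ((v/2 : ℝ) : ℂ))) * (((v ^ ν / (2*v) : ℝ)) : ℂ)
    with hf
  have hfint : ∫ v in Set.Ioi (0:ℝ), f v = (Real.Gamma ν : ℂ) * (z/2) ^ (-(ν:ℂ)) / 2 := by
    have hcongr : ∀ v ∈ Set.Ioi (0:ℝ),
        f v = (2⁻¹ : ℂ) * ((v:ℂ) ^ ((ν:ℂ) - 1) * Complex.exp (-(z/2 * v))) := by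
      intro v hv
      have hv' : (0:ℝ) < v := hv
      have h1 : ((v ^ ν / (2*v) : ℝ) : ℂ) = ((v ^ (ν-1) / 2 : ℝ) : ℂ) := by
        norm_cast
        rw [show v ^ ν / (2*v) = v ^ ν / v / 2 by ring]
        congr 1
        nth_rewrite 2 [show v = v ^ (1:ℝ) by rw [Real.rpow_one]]
        rw [← Real.rpow_sub hv']
      have h2 : ((v ^ (ν - 1) : ℝ) : ℂ) = (v:ℂ) ^ ((ν:ℂ) - 1) := by
        rw [Complex.ofReal_cpow hv'.le]
        norm_num
      have h3 : -(z * ((v/2 : ℝ) : ℂ)) = -(z/2 * v) := by push_cast; ring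
      rw [hf]
      simp only
      rw [h3, h1]
      push_cast
      rw [← h2]
      push_cast
      ring
    rw [setIntegral_congr_fun measurableSet_Ioi hcongr, integral_const_mul,
      integral_cpow_mul_exp_neg_cmul hν hz2]
    ring
  have hmain : Tendsto
      (fun m : ℝ => ∫ v in Set.Ioi (0:ℝ), (Set.Ioi m).indicator (gfun ν z m) v) (𝓝[>] 0)
      (𝓝 (∫ v in Set.Ioi (0:ℝ), f v)) := by
    apply tendsto_integral_filter_of_dominated_convergence
      (bound := fun v => v ^ (ν - 1) * Real.exp (-(z.re/2) * v))
    · filter_upwards [self_mem_nhdsWithin] with m hm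
      exact ((gfun_meas ν z m).indicator measurableSet_Ioi)
    · filter_upwards [self_mem_nhdsWithin] with m hm
      filter_upwards [ae_restrict_mem measurableSet_Ioi] with v hv
      by_cases hmv : v ∈ Set.Ioi m
      · rw [Set.indicator_of_mem hmv]
        exact gfun_norm_le hν hz hm hmv
      · rw [Set.indicator_of_notMem hmv, norm_zero]
        have hv' : (0:ℝ) < v := hv
        positivity
    · exact integrableOn_rpow_mul_exp_neg_mul (by linarith) (by positivity)
    · filter_upwards [ae_restrict_mem measurableSet_Ioi] with v hv
      have hv' : (0:ℝ) < v := hv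
      have hev : ∀ᶠ m in 𝓝[>] (0:ℝ), (Set.Ioi m).indicator (gfun ν z m) v = gfun ν z m v := by
        filter_upwards [Ioo_mem_nhdsGT_of_mem (Set.mem_Ico.mpr ⟨le_refl 0, hv'⟩)] with m hm
        exact Set.indicator_of_mem (Set.mem_Ioi.mpr hm.2) _
      have h1 : Tendsto (fun m : ℝ => ((v + m^2/v)/2 : ℝ)) (𝓝 0) (𝓝 (v/2)) := by
        have hc : Continuous fun m : ℝ => ((v + m^2/v)/2 : ℝ) := by fun_prop
        have := hc.tendsto 0
        simpa using this
      have h2 : Tendsto (fun m : ℝ => m^(2*ν)) (𝓝 0) (𝓝 0) := by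
        have h := (Real.continuousAt_rpow_const 0 (2*ν) (Or.inr (by positivity))).tendsto
        simpa [Real.zero_rpow (by positivity : (2*ν) ≠ 0)] using h
      have hexp : Tendsto (fun m : ℝ => Complex.exp (-(z * (((v + m^2/v)/2 : ℝ) : ℂ))))
          (𝓝 0) (𝓝 (Complex.exp (-(z * ((v/2 : ℝ) : ℂ))))) := by
        apply (Complex.continuous_exp.tendsto _).comp
        exact (((Complex.continuous_ofReal.tendsto _).comp h1).const_mul z).neg
      have hfac : Tendsto (fun m : ℝ => (((v ^ ν + m^(2*ν) * v^(-ν)) / (2*v) : ℝ) : ℂ))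
          (𝓝 0) (𝓝 (((v ^ ν / (2*v) : ℝ)) : ℂ)) := by
        apply (Complex.continuous_ofReal.tendsto _).comp
        have := (tendsto_const_nhds (x := v ^ ν).add (h2.mul_const (v^(-ν)))).div_const (2*v)
        simpa using this
      have hT : Tendsto (fun m : ℝ => gfun ν z m v) (𝓝[>] 0) (𝓝 (f v)) :=
        ((hexp.mul hfac).mono_left (nhdsWithin_le_nhds : 𝓝[>] (0:ℝ) ≤ 𝓝 0))
      exact hT.congr' (by filter_upwards [hev] with m hm; rw [hm])
  rw [hfint] at hmain
  apply hmain.congr'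
  filter_upwards [self_mem_nhdsWithin] with m hm
  rw [integral_indicator measurableSet_Ioi, Measure.restrict_restrict measurableSet_Ioi,
    Set.Ioi_inter_Ioi]
  rw [show max m 0 = m from max_eq_left (le_of_lt hm)]
  exact subst_eq ν hm z

lemma gfun_measurable (ν : ℝ) (z : ℂ) (m : ℝ) : Measurable (gfun ν z m) := by
  unfold gfun
  fun_prop

lemma gfun_integrableOn {ν : ℝ} (hν : 0 < ν) {z : ℂ} (hz : 0 < z.re) {m : ℝ} (hm : 0 < m) :
    IntegrableOn (gfun ν z m) (Set.Ioi m) := by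
  refine Integrable.mono'
    ((integrableOn_rpow_mul_exp_neg_mul (s := ν - 1) (b := z.re/2) (by linarith)
      (by positivity)).mono_set (Set.Ioi_subset_Ioi hm.le))
    ((gfun_measurable ν z m).aestronglyMeasurable) ?_
  filter_upwards [ae_restrict_mem measurableSet_Ioi] with v hv
  exact gfun_norm_le hν hz hm hv

lemma besselK_integrand_integrableOn {ν : ℝ} (hν : 0 < ν) {z : ℂ} (hz : 0 < z.re)
    {m : ℝ} (hm : 0 < m) :
    IntegrableOn (fun t : ℝ =>
      Complex.exp (-((m:ℂ) * z) * (Real.cosh t : ℂ)) * (Real.cosh (ν * t) : ℂ))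
      (Set.Ioi 0) := by
  have h1 : IntegrableOn (gfun ν z m) ((fun t : ℝ => m * Real.exp t) '' Set.Ioi 0) := by
    rw [image_mul_exp hm]; exact gfun_integrableOn hν hz hm
  rw [integrableOn_image_iff_integrableOn_abs_deriv_smul measurableSet_Ioi
    hasDeriv_mul_exp (injOn_mul_exp hm)] at h1
  have hne : ((m ^ ν : ℝ) : ℂ) ≠ 0 := by
    simp only [ne_eq, Complex.ofReal_eq_zero]
    positivity
  have h2 : IntegrableOn (fun t : ℝ => ((m ^ ν : ℝ) : ℂ)
      * (Complex.exp (-((m:ℂ) * z) * (Real.cosh t : ℂ)) * (Real.cosh (ν * t) : ℂ)))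
      (Set.Ioi 0) := by
    refine IntegrableOn.congr_fun h1 (fun t ht => ?_) measurableSet_Ioi
    exact pointwise_eq ν hm z ht
  refine (h2.const_mul (((m ^ ν : ℝ) : ℂ))⁻¹).congr (Eventually.of_forall (fun t => ?_))
  dsimp only
  rw [← mul_assoc, inv_mul_cancel₀ hne, one_mul]

lemma tendsto_mul_besselK_zero {z : ℂ} (hz : 0 < z.re) :
    Tendsto (fun m : ℝ => (m:ℂ) * besselK 0 ((m:ℂ) * z)) (𝓝[>] 0) (𝓝 0) := by
  set a : ℝ := z.re with ha
  have haz : (0:ℝ) < ((a:ℂ)).re := by simpa using hz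
  have hhalf := tendsto_rpow_mul_besselK (ν := 1/2) (by norm_num) haz
  have hnorm := hhalf.norm
  have hsq : Tendsto (fun m : ℝ => m ^ (1/2 : ℝ)) (𝓝[>] 0) (𝓝 0) := by
    have h := (Real.continuousAt_rpow_const 0 (1/2) (Or.inr (by norm_num))).tendsto
    rw [Real.zero_rpow (by norm_num : (1/2:ℝ) ≠ 0)] at h
    exact h.mono_left nhdsWithin_le_nhds
  rw [tendsto_zero_iff_norm_tendsto_zero]
  apply squeeze_zero' (Eventually.of_forall (fun m => norm_nonneg _))
    (g := fun m : ℝ => m ^ (1/2:ℝ)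
      * ‖((m ^ (1/2:ℝ) : ℝ) : ℂ) * besselK (1/2) ((m:ℂ) * (a:ℂ))‖)
  · filter_upwards [self_mem_nhdsWithin] with m (hm : 0 < m)
    have hint : IntegrableOn (fun t : ℝ =>
        Complex.exp (-((m:ℂ) * (a:ℂ)) * (Real.cosh t : ℂ)) * (Real.cosh ((1/2) * t) : ℂ))
        (Set.Ioi 0) := besselK_integrand_integrableOn (by norm_num) haz hm
    have heq : ∀ t : ℝ, Complex.exp (-((m:ℂ) * (a:ℂ)) * (Real.cosh t : ℂ))
        * (Real.cosh ((1/2) * t) : ℂ)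
        = ((Real.exp (-(m * a * Real.cosh t)) * Real.cosh ((1/2) * t) : ℝ) : ℂ) := by
      intro t
      rw [show -((m:ℂ) * (a:ℂ)) * ((Real.cosh t : ℝ) : ℂ)
          = ((-(m * a * Real.cosh t) : ℝ) : ℂ) by push_cast; ring,
        ← Complex.ofReal_exp, ← Complex.ofReal_mul]
    have hR : IntegrableOn (fun t : ℝ =>
        Real.exp (-(m * a * Real.cosh t)) * Real.cosh ((1/2) * t)) (Set.Ioi 0) := by
      refine hint.norm.congr (Eventually.of_forall (fun t => ?_))
      dsimp only
      rw [heq t, Complex.norm_real, Real.norm_eq_abs, _root_.abs_of_nonneg (by positivity)]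
    have hle1 : ‖besselK 0 ((m:ℂ) * z)‖
        ≤ ∫ t in Set.Ioi (0:ℝ), Real.exp (-(m * a * Real.cosh t)) := by
      refine (norm_integral_le_integral_norm _).trans_eq ?_
      refine setIntegral_congr_fun measurableSet_Ioi (fun t ht => ?_)
      rw [norm_mul, Complex.norm_exp,
        Complex.norm_real, Real.norm_eq_abs]
      simp [Complex.mul_re, ha]
    have hle2 : ∫ t in Set.Ioi (0:ℝ), Real.exp (-(m * a * Real.cosh t))
        ≤ ∫ t in Set.Ioi (0:ℝ), Real.exp (-(m * a * Real.cosh t)) * Real.cosh ((1/2) * t) := by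
      refine integral_mono_of_nonneg (Eventually.of_forall (fun t => (Real.exp_pos _).le)) hR
        (Eventually.of_forall (fun t => ?_))
      have h1 : (1:ℝ) ≤ Real.cosh ((1/2) * t) := Real.one_le_cosh _
      nlinarith [Real.exp_pos (-(m * a * Real.cosh t))]
    have hbK : besselK (1/2) ((m:ℂ) * (a:ℂ))
        = ((∫ t in Set.Ioi (0:ℝ), Real.exp (-(m * a * Real.cosh t)) * Real.cosh ((1/2) * t) : ℝ) : ℂ) := by
      unfold besselK
      rw [setIntegral_congr_fun measurableSet_Ioi (fun t _ => heq t)]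
      exact integral_ofReal
    have hle3 : ∫ t in Set.Ioi (0:ℝ), Real.exp (-(m * a * Real.cosh t)) * Real.cosh ((1/2) * t)
        ≤ ‖besselK (1/2) ((m:ℂ) * (a:ℂ))‖ := by
      rw [hbK, Complex.norm_real, Real.norm_eq_abs]
      exact le_abs_self _
    have hKnorm : ‖besselK 0 ((m:ℂ) * z)‖ ≤ ‖besselK (1/2) ((m:ℂ) * (a:ℂ))‖ :=
      hle1.trans (hle2.trans hle3)
    calc ‖(m:ℂ) * besselK 0 ((m:ℂ) * z)‖ = m * ‖besselK 0 ((m:ℂ) * z)‖ := by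
          rw [norm_mul, Complex.norm_real, Real.norm_eq_abs, _root_.abs_of_pos hm]
      _ ≤ m * ‖besselK (1/2) ((m:ℂ) * (a:ℂ))‖ := mul_le_mul_of_nonneg_left hKnorm hm.le
      _ = m ^ (1/2:ℝ) * ‖((m ^ (1/2:ℝ) : ℝ) : ℂ) * besselK (1/2) ((m:ℂ) * (a:ℂ))‖ := by
          rw [norm_mul, Complex.norm_real, Real.norm_eq_abs,
            _root_.abs_of_pos (Real.rpow_pos_of_pos hm _), ← mul_assoc,
            ← Real.rpow_add hm]
          norm_num
  · have := hsq.mul hnorm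
    simpa using this

/-- The massless limit of the trace term of the massive Dirac field's Wightman functions:
`lim_{m→0⁺} m² (m/(2πz))^(d−2) [K_{d/2}(mz)² − K_{d/2−1}(mz)²] = Γ(d/2)²/(π^(d−2) z^(2d−2))`. -/
theorem massless_limit_dirac_trace_term (d : ℕ) (hd : 2 ≤ d) (z : ℂ) (hz : 0 < z.re) :
    Tendsto (fun m : ℝ =>
        (m : ℂ) ^ 2 * ((m : ℂ) / (2 * (Real.pi : ℂ) * z)) ^ (d - 2) *
          ((besselK ((d : ℝ) / 2) ((m : ℂ) * z)) ^ 2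
            - (besselK ((d : ℝ) / 2 - 1) ((m : ℂ) * z)) ^ 2))
      (𝓝[>] 0)
      (𝓝 (((Real.Gamma ((d : ℝ) / 2) : ℂ)) ^ 2 /
        ((Real.pi : ℂ) ^ (d - 2) * z ^ (2 * d - 2)))) := by
  obtain ⟨k, rfl⟩ : ∃ k, d = k + 2 := ⟨d - 2, by omega⟩
  simp only [Nat.add_sub_cancel, show 2 * (k + 2) - 2 = 2 * k + 2 by omega]
  have hz0 : z ≠ 0 := fun h => by rw [h] at hz; simp at hz
  have hπ : ((Real.pi : ℝ) : ℂ) ≠ 0 := Complex.ofReal_ne_zero.mpr Real.pi_ne_zero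
  have h2πz : (2 * (Real.pi : ℂ) * z) ≠ 0 := by
    apply mul_ne_zero (mul_ne_zero two_ne_zero hπ) hz0
  set ν : ℝ := ((k + 2 : ℕ) : ℝ) / 2 with hνdef
  have hν : 0 < ν := by positivity
  have hA := tendsto_rpow_mul_besselK hν hz
  set L : ℂ := (Real.Gamma ν : ℂ) * (z/2) ^ (-(ν:ℂ)) / 2 with hL
  -- the subtracted term tends to 0
  have hB : Tendsto (fun m : ℝ =>
      (m:ℂ)^2 * (((m ^ (ν - 1) : ℝ) : ℂ) * besselK (ν - 1) ((m:ℂ) * z))^2) (𝓝[>] 0)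
      (𝓝 0) := by
    rcases Nat.eq_zero_or_pos k with hk | hk
    · subst hk
      have hν1 : ν - 1 = 0 := by rw [hνdef]; norm_num
      rw [hν1]
      have hK := tendsto_mul_besselK_zero hz
      have := hK.mul hK
      rw [mul_zero] at this
      apply this.congr
      intro m
      rw [Real.rpow_zero]
      push_cast
      ring
    · have hν1 : 0 < ν - 1 := by
        rw [hνdef]
        have : (1:ℝ) ≤ k := by exact_mod_cast hk
        push_cast
        linarith
      have hB' := tendsto_rpow_mul_besselK hν1 hz
      have hm2 : Tendsto (fun m : ℝ => (m:ℂ)^2) (𝓝[>] 0) (𝓝 0) := by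
        have h0 : Tendsto (fun m : ℝ => (m:ℂ)) (𝓝[>] 0) (𝓝 0) := by
          have := (Complex.continuous_ofReal.tendsto 0).mono_left
            (nhdsWithin_le_nhds : 𝓝[>] (0:ℝ) ≤ 𝓝 0)
          simpa using this
        have := (h0.pow 2)
        simpa using this
      have := hm2.mul (hB'.pow 2)
      simpa using this
  -- rewrite the function
  have hfun : ∀ᶠ (m : ℝ) in 𝓝[>] (0:ℝ),
      (m : ℂ) ^ 2 * ((m : ℂ) / (2 * (Real.pi : ℂ) * z)) ^ k *
          ((besselK ν ((m : ℂ) * z)) ^ 2 - (besselK (ν - 1) ((m : ℂ) * z)) ^ 2)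
        = ((((m ^ ν : ℝ) : ℂ) * besselK ν ((m:ℂ) * z))^2
            - (m:ℂ)^2 * (((m ^ (ν - 1) : ℝ) : ℂ) * besselK (ν - 1) ((m:ℂ) * z))^2)
          / (2 * (Real.pi : ℂ) * z) ^ k := by
    filter_upwards [self_mem_nhdsWithin] with m (hm : 0 < m)
    have e1 : ((m ^ ν : ℝ) : ℂ)^2 = (m:ℂ)^2 * (m:ℂ)^k := by
      have : (m ^ ν) ^ 2 = m ^ (k + 2 : ℕ) := by
        rw [← Real.rpow_natCast (m ^ ν) 2, ← Real.rpow_mul hm.le,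
          show ν * ((2:ℕ):ℝ) = ((k + 2 : ℕ):ℝ) by rw [hνdef]; push_cast; ring,
          Real.rpow_natCast]
      calc ((m ^ ν : ℝ) : ℂ)^2 = (((m ^ ν)^2 : ℝ) : ℂ) := by push_cast; ring
        _ = ((m ^ (k + 2 : ℕ) : ℝ) : ℂ) := by rw [this]
        _ = (m:ℂ)^2 * (m:ℂ)^k := by push_cast; ring
    have e2 : ((m ^ (ν - 1) : ℝ) : ℂ)^2 = (m:ℂ)^k := by
      have : (m ^ (ν - 1)) ^ 2 = m ^ (k : ℕ) := by
        rw [← Real.rpow_natCast (m ^ (ν-1)) 2, ← Real.rpow_mul hm.le,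
          show (ν - 1) * ((2:ℕ):ℝ) = ((k : ℕ):ℝ) by rw [hνdef]; push_cast; ring,
          Real.rpow_natCast]
      calc ((m ^ (ν - 1) : ℝ) : ℂ)^2 = (((m ^ (ν - 1))^2 : ℝ) : ℂ) := by push_cast; ring
        _ = ((m ^ (k : ℕ) : ℝ) : ℂ) := by rw [this]
        _ = (m:ℂ)^k := by push_cast; ring
    rw [div_pow, mul_pow (((m ^ ν : ℝ) : ℂ)) (besselK ν ((m:ℂ) * z)) 2,
      mul_pow (((m ^ (ν - 1) : ℝ) : ℂ)) (besselK (ν - 1) ((m:ℂ) * z)) 2, e1, e2]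
    field_simp
  -- limit value
  have hlim : Tendsto (fun m : ℝ =>
      ((((m ^ ν : ℝ) : ℂ) * besselK ν ((m:ℂ) * z))^2
        - (m:ℂ)^2 * (((m ^ (ν - 1) : ℝ) : ℂ) * besselK (ν - 1) ((m:ℂ) * z))^2)
      / (2 * (Real.pi : ℂ) * z) ^ k) (𝓝[>] 0)
      (𝓝 ((L^2 - 0) / (2 * (Real.pi : ℂ) * z) ^ k)) :=
    (((hA.pow 2).sub hB)).div_const _
  have hconst : (L^2 - 0) / (2 * (Real.pi : ℂ) * z) ^ k
      = ((Real.Gamma ν : ℂ)) ^ 2 / ((Real.pi : ℂ) ^ k * z ^ (2 * k + 2)) := by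
    have hzh : (z/2 : ℂ) ≠ 0 := div_ne_zero hz0 two_ne_zero
    have hcp : ((z/2 : ℂ) ^ (-(ν:ℂ)))^2 = ((z/2 : ℂ)^(k + 2 : ℕ))⁻¹ := by
      have h1 : ((z/2 : ℂ) ^ (-(ν:ℂ)))^2 = (z/2 : ℂ) ^ (-(ν:ℂ) + -(ν:ℂ)) := by
        rw [Complex.cpow_add _ _ hzh]; ring
      have h2 : (-(ν:ℂ) + -(ν:ℂ)) = -((k + 2 : ℕ) : ℂ) := by
        rw [hνdef]; push_cast; ring
      rw [h1, h2, Complex.cpow_neg, Complex.cpow_natCast]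
    rw [hL]
    rw [div_pow, mul_pow, hcp]
    have hzk : (z:ℂ) ^ (2*k+2) = z^k * z^k * z^2 := by ring
    field_simp
    rw [div_pow, pow_add, mul_pow, mul_pow]
    field_simp
    ring
  rw [hconst] at hlim
  exact hlim.congr' (hfun.mono fun m h => h.symm)
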